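/- Let α ∈ (0,1), n ∈ ℕ with n ≥ 1, and let X₀, X₁, …, Xₙ be i.i.d. real-valued random variables. Let M₀ = |{ i ∈ {1,…,n} : Xᵢ ≤ X₀ }|, and let k = ⌊αn⌋. Then P(M₀ ≤ k) ≤ (k + 1)/(n + 1). -/

import Mathlib

open MeasureTheory ProbabilityTheory Finset
open scoped ENNReal

/-!
At most `k + 1` indices can have rank at most `k` among the others, since all of them are counted
in the rank of the one with the largest value. The law of `(X₀, …, Xₙ)` is a product of identical
factors, hence invariant under swapping coordinates, so all the events `Mᵢ ≤ k` have the same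
probability; their probabilities sum to `E[#{i | Mᵢ ≤ k}] ≤ k + 1`.
-/

open Classical in
lemma sum_measure_le_of_card_mem_le {Ω ι : Type*} [MeasurableSpace Ω] [Fintype ι]
    (μ : Measure Ω) {A : ι → Set Ω} (hA : ∀ i, MeasurableSet (A i)) {c : ℕ}
    (hc : ∀ ω, #{i | ω ∈ A i} ≤ c) : ∑ i, μ (A i) ≤ c * μ Set.univ :=
  calc ∑ i, μ (A i) = ∫⁻ ω, ∑ i, (A i).indicator 1 ω ∂μ := by
        rw [lintegral_finsetSum _ fun i _ => measurable_one.indicator (hA i)]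
        simp_rw [lintegral_indicator_one (hA _)]
    _ ≤ ∫⁻ _, (c : ℝ≥0∞) ∂μ := lintegral_mono fun ω => by
        simp_rw [Set.indicator_apply, Pi.one_apply, sum_boole]
        exact_mod_cast hc ω
    _ = c * μ Set.univ := lintegral_const _

lemma measurePreserving_comp_perm {ι β : Type*} [Fintype ι] [MeasurableSpace β] (ν : Measure β)
    [SigmaFinite ν] (e : Equiv.Perm ι) :
    MeasurePreserving (fun x : ι → β => x ∘ e) (Measure.pi fun _ => ν) (Measure.pi fun _ => ν) := by
  convert measurePreserving_piCongrLeft (fun _ : ι => ν) e.symm using 1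
  ext x j
  rw [MeasurableEquiv.coe_piCongrLeft, ← e.symm_apply_apply j, Equiv.piCongrLeft_apply_apply]
  simp

section Rank

variable {ι α : Type*} [Fintype ι] [DecidableEq ι] [LinearOrder α]

def rank (x : ι → α) (i : ι) : ℕ := #{j | j ≠ i ∧ x j ≤ x i}

lemma rank_comp_perm (x : ι → α) (e : Equiv.Perm ι) (i : ι) :
    rank (x ∘ e) i = rank x (e i) :=
  card_equiv e fun j => by simp

lemma card_rank_le_le (x : ι → α) (k : ℕ) : #{i | rank x i ≤ k} ≤ k + 1 := by
  set S : Finset ι := {i | rank x i ≤ k}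
  obtain hS | hS := S.eq_empty_or_nonempty
  · simp [hS]
  obtain ⟨i, hiS, hmax⟩ := S.exists_max_image x hS
  have hsub : S.erase i ⊆ ({j | j ≠ i ∧ x j ≤ x i} : Finset ι) := fun j hj => by
    rw [mem_erase] at hj
    exact mem_filter.2 ⟨mem_univ _, hj.1, hmax j hj.2⟩
  calc #S = #(S.erase i) + 1 := (card_erase_add_one hiS).symm
    _ ≤ rank x i + 1 := by gcongr; exact card_le_card hsub
    _ ≤ k + 1 := by gcongr; exact (mem_filter.1 hiS).2

variable [MeasurableSpace α] [TopologicalSpace α] [OpensMeasurableSpace α] [OrderClosedTopology α]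
  [SecondCountableTopology α]

lemma measurable_rank (i : ι) : Measurable fun x : ι → α => rank x i := by
  simp_rw [rank, card_filter]
  refine Finset.measurable_sum _ fun j _ => Measurable.ite ?_ measurable_const measurable_const
  exact (MeasurableSet.const _).inter
    (measurableSet_le (measurable_pi_apply j) (measurable_pi_apply i))

lemma measurableSet_rank_le (i : ι) (k : ℕ) : MeasurableSet {x : ι → α | rank x i ≤ k} :=
  measurable_rank i measurableSet_Iic

lemma measure_pi_rank_le_eq (ν : Measure α) [SigmaFinite ν] (i j : ι) (k : ℕ) :
    Measure.pi (fun _ => ν) {x | rank x i ≤ k} = Measure.pi (fun _ => ν) {x | rank x j ≤ k} := by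
  have hswap : {x : ι → α | rank x i ≤ k} = (· ∘ Equiv.swap i j) ⁻¹' {x | rank x j ≤ k} := by
    ext x
    simp [rank_comp_perm]
  rw [hswap, (measurePreserving_comp_perm ν _).measure_preimage
    (measurableSet_rank_le j k).nullMeasurableSet]

lemma card_mul_measure_pi_rank_le_le (ν : Measure α) [IsProbabilityMeasure ν] (i : ι) (k : ℕ) :
    Fintype.card ι * Measure.pi (fun _ => ν) {x | rank x i ≤ k} ≤ k + 1 := by
  calc Fintype.card ι * Measure.pi (fun _ => ν) {x | rank x i ≤ k}
      = ∑ j, Measure.pi (fun _ => ν) {x | rank x j ≤ k} := by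
        rw [sum_congr rfl fun j _ => measure_pi_rank_le_eq ν j i k]
        simp
    _ ≤ (k + 1 : ℕ) * Measure.pi (fun _ => ν) Set.univ :=
        sum_measure_le_of_card_mem_le _ (fun j => measurableSet_rank_le j k)
          fun x : ι → α => by simpa only [Set.mem_ofPred_eq] using card_rank_le_le x k
    _ = k + 1 := by simp

end Rank

theorem rank_probability_bound_general
    {Ω : Type*} [MeasurableSpace Ω] (μ : Measure Ω) [IsProbabilityMeasure μ]
    (n : ℕ)
    (X : Fin (n + 1) → Ω → ℝ) (hX : ∀ i, Measurable (X i))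
    (hindep : iIndepFun X μ)
    (hident : ∀ i, Measure.map (X i) μ = Measure.map (X 0) μ)
    (M₀ : Ω → ℕ)
    (hM₀ : ∀ ω, M₀ ω =
      (Finset.univ.filter (fun i : Fin (n + 1) => i ≠ 0 ∧ X i ω ≤ X 0 ω)).card)
    (k : ℕ) :
    (μ {ω | M₀ ω ≤ k}).toReal ≤ ((k : ℝ) + 1) / ((n : ℝ) + 1) := by
  have hXmeas : Measurable fun ω i => X i ω := measurable_pi_lambda _ hX
  have hlaw : μ.map (fun ω i => X i ω) = Measure.pi fun _ => μ.map (X 0) := by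
    rw [(iIndepFun_iff_map_fun_eq_pi_map fun i => (hX i).aemeasurable).1 hindep]
    simp_rw [hident]
  have hM₀_rank : {ω | M₀ ω ≤ k} = (fun ω i => X i ω) ⁻¹' {x | rank x 0 ≤ k} := by
    ext ω
    simp [hM₀, rank]
  have := Measure.isProbabilityMeasure_map (μ := μ) (hX 0).aemeasurable
  have hbound := card_mul_measure_pi_rank_le_le (μ.map (X 0)) (0 : Fin (n + 1)) k
  rw [← hlaw, Measure.map_apply hXmeas (measurableSet_rank_le 0 k), ← hM₀_rank,
    Fintype.card_fin] at hbound
  rw [le_div_iff₀ (by positivity), mul_comm]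
  have hbound_real := ENNReal.toReal_mono (by simp) hbound
  rw [ENNReal.toReal_mul] at hbound_real
  exact_mod_cast hbound_real

/-- Core estimate in the proof of Theorem 3: for `α ∈ (0,1)`, `n ≥ 1`, i.i.d.
`X₀, X₁, …, Xₙ`, `M₀ = |{i ∈ {1,…,n} : Xᵢ ≤ X₀}|`, and `k = ⌊αn⌋`, one has
`P(M₀ ≤ k) ≤ (k + 1)/(n + 1)`. -/
theorem rank_probability_bound
    {Ω : Type*} [MeasurableSpace Ω] (μ : Measure Ω) [IsProbabilityMeasure μ]
    (α : ℝ) (hα : α ∈ Set.Ioo (0 : ℝ) 1)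
    (n : ℕ) (hn : 1 ≤ n)
    (X : Fin (n + 1) → Ω → ℝ) (hX : ∀ i, Measurable (X i))
    (hindep : iIndepFun X μ)
    (hident : ∀ i, Measure.map (X i) μ = Measure.map (X 0) μ)
    (M₀ : Ω → ℕ)
    (hM₀ : ∀ ω, M₀ ω =
      (Finset.univ.filter (fun i : Fin (n + 1) => i ≠ 0 ∧ X i ω ≤ X 0 ω)).card)
    (k : ℕ) (hk : k = ⌊α * n⌋₊) :
    (μ {ω | M₀ ω ≤ k}).toReal ≤ ((k : ℝ) + 1) / ((n : ℝ) + 1) :=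
  rank_probability_bound_general μ n X hX hindep hident M₀ hM₀ k
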